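/- arXiv:1801.00542 — 3 statements merged into one kernel-verified Lean document; each statement's English description precedes it below -/
import Mathlib

section
/- Let W_1,…,W_n be independent {0,1}-valued random variables and f: {0,1}^n → ℝ. For any q ≥ 1, the L^q norm of f(W) − E f(W) is at most sqrt(πq/2)·‖Δf‖₂, where ‖Δf‖₂² = Σ_{i=1}^n ‖Δ_i f‖_∞². -/
/-!
Conditioned on the first coordinate, the conditional means of `f` differ by at most `Δ 0`, so
convexity of `exp` (a weak Hoeffding lemma, via `cosh c ≤ exp (c ^ 2 / 2)`) and induction on the
number of coordinates make `f (W) - E f (W)` sub-Gaussian with variance proxy `∑ i, Δ i ^ 2`.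
For a sub-Gaussian `X` with proxy `c`, integrating
`λ ^ q |z| ^ q ≤ (q / e) ^ q (exp (λ z) + exp (-λ z))` at `λ = √(q / c)` gives
`E |X| ^ q ≤ 2 (q c / e) ^ (q / 2)`; as `2 ^ (1 / q) ≤ 2` and `8 ≤ π e`, the `q`-th root of
this is at most `√(π q / 2) √c`.
-/

open MeasureTheory ProbabilityTheory Real Finset
open scoped NNReal

namespace Real

lemma exp_le_cosh_add_div_mul_sinh {x c : ℝ} (hc : 0 < c) (hx : |x| ≤ c) :
    exp x ≤ cosh c + x / c * sinh c := by
  obtain ⟨hxl, hxu⟩ := abs_le.1 hx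
  have hconv := convexOn_exp.2 (Set.mem_univ c) (Set.mem_univ (-c))
    (div_nonneg (by linarith) (by positivity) : 0 ≤ (c + x) / (2 * c))
    (div_nonneg (by linarith) (by positivity) : 0 ≤ (c - x) / (2 * c))
    (by field_simp; ring)
  have hx_eq : ((c + x) / (2 * c)) • c + ((c - x) / (2 * c)) • -c = x := by
    simp only [smul_eq_mul]; field_simp; ring
  rw [hx_eq] at hconv
  refine hconv.trans_eq ?_
  simp only [smul_eq_mul, cosh_eq, sinh_eq]
  field_simp
  ring

lemma rpow_le_div_exp_one_rpow_mul_exp {u q : ℝ} (hu : 0 ≤ u) (hq : 0 < q) :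
    u ^ q ≤ (q / exp 1) ^ q * exp u := by
  have hlin : u / q ≤ exp (u / q - 1) := by linarith [add_one_le_exp (u / q - 1)]
  calc u ^ q = q ^ q * (u / q) ^ q := by
        rw [← mul_rpow hq.le (by positivity), mul_div_cancel₀ _ hq.ne']
    _ ≤ q ^ q * exp (u / q - 1) ^ q := by gcongr
    _ = (q / exp 1) ^ q * exp u := by
        rw [← exp_mul, div_rpow hq.le (exp_pos 1).le, exp_one_rpow, sub_mul,
          div_mul_cancel₀ _ hq.ne', one_mul, exp_sub]
        ring

lemma rpow_mul_abs_rpow_le_mul_exp_add_exp {z l q : ℝ} (hl : 0 < l) (hq : 0 < q) :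
    l ^ q * |z| ^ q ≤ (q / exp 1) ^ q * (exp (l * z) + exp (-(l * z))) := by
  rw [← mul_rpow hl.le (abs_nonneg z), ← abs_of_pos hl, ← abs_mul, abs_of_pos hl]
  refine (rpow_le_div_exp_one_rpow_mul_exp (abs_nonneg _) hq).trans ?_
  gcongr
  rcases abs_cases (l * z) with ⟨h, _⟩ | ⟨h, _⟩ <;> rw [h]
  · exact le_add_of_nonneg_right (exp_pos _).le
  · exact le_add_of_nonneg_left (exp_pos _).le

end Real

section FiniteHoeffding

variable {α : Type*} [Fintype α] {p : α → ℝ}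

lemma sum_mul_exp_le_exp_sq_div_two (hp0 : ∀ b, 0 ≤ p b) (hp1 : ∑ b, p b = 1) {u : α → ℝ}
    {c : ℝ} (hmean : ∑ b, p b * u b = 0) (hu : ∀ b, |u b| ≤ c) :
    ∑ b, p b * exp (u b) ≤ exp (c ^ 2 / 2) := by
  rcases le_or_gt c 0 with hc | hc
  · have hu0 : ∀ b, u b = 0 := fun b => abs_nonpos_iff.1 ((hu b).trans hc)
    simp only [hu0, exp_zero, mul_one, hp1]
    exact one_le_exp (by positivity)
  calc ∑ b, p b * exp (u b) ≤ ∑ b, p b * (cosh c + u b / c * sinh c) :=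
        sum_le_sum fun b _ => mul_le_mul_of_nonneg_left
          (exp_le_cosh_add_div_mul_sinh hc (hu b)) (hp0 b)
    _ = cosh c := by
        have hsinh : ∑ b, p b * (u b / c * sinh c) = (∑ b, p b * u b) / c * sinh c := by
          rw [sum_div, sum_mul]
          exact sum_congr rfl fun b _ => by ring
        simp only [mul_add, sum_add_distrib]
        rw [← sum_mul, hp1, one_mul, hsinh, hmean, zero_div, zero_mul, add_zero]
    _ ≤ exp (c ^ 2 / 2) := cosh_le_exp_half_sq c

lemma sum_mul_exp_le_exp_sum_mul_add (hp0 : ∀ b, 0 ≤ p b) (hp1 : ∑ b, p b = 1) {v : α → ℝ}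
    {d : ℝ} (hv : ∀ b c, |v b - v c| ≤ d) :
    ∑ b, p b * exp (v b) ≤ exp (∑ b, p b * v b + d ^ 2 / 2) := by
  set m := ∑ b, p b * v b
  have hdev : ∀ b, v b - m = ∑ c, p c * (v b - v c) := fun b => by
    simp only [m, mul_sub, sum_sub_distrib, ← sum_mul, hp1, one_mul]
  have hmean : ∑ b, p b * (v b - m) = 0 := by
    simp only [mul_sub, sum_sub_distrib, ← sum_mul, hp1, one_mul, m, sub_self]
  have hdev_le : ∀ b, |v b - m| ≤ d := fun b => by
    rw [hdev b]
    calc |∑ c, p c * (v b - v c)| ≤ ∑ c, p c * d := by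
          refine (abs_sum_le_sum_abs _ _).trans (sum_le_sum fun c _ => ?_)
          rw [abs_mul, abs_of_nonneg (hp0 c)]
          exact mul_le_mul_of_nonneg_left (hv b c) (hp0 c)
      _ = d := by rw [← sum_mul, hp1, one_mul]
  calc ∑ b, p b * exp (v b) = exp m * ∑ b, p b * exp (v b - m) := by
        rw [mul_sum]
        exact sum_congr rfl fun b _ => by rw [← mul_left_comm, ← exp_add, add_sub_cancel]
    _ ≤ exp m * exp (d ^ 2 / 2) := by
        gcongr
        exact sum_mul_exp_le_exp_sq_div_two hp0 hp1 hmean hdev_le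
    _ = exp (m + d ^ 2 / 2) := (exp_add _ _).symm

end FiniteHoeffding

section PiExpect

variable {α : Type*} [Fintype α] {n : ℕ}

noncomputable def piExpect (w : Fin n → α → ℝ) (g : (Fin n → α) → ℝ) : ℝ :=
  ∑ x, (∏ i, w i (x i)) * g x

lemma piExpect_cons (w : Fin (n + 1) → α → ℝ) (g : (Fin (n + 1) → α) → ℝ) :
    piExpect w g = ∑ b, w 0 b * piExpect (fun i => w i.succ) (fun y => g (Fin.cons b y)) := by
  rw [piExpect, ← (Fin.consEquiv fun _ => α).sum_comp, Fintype.sum_prod_type]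
  refine sum_congr rfl fun b _ => ?_
  rw [piExpect, mul_sum]
  refine sum_congr rfl fun y _ => ?_
  simp [Fin.consEquiv, Fin.prod_univ_succ, mul_assoc]

variable {w : Fin n → α → ℝ}

lemma abs_piExpect_sub_le (hw0 : ∀ i b, 0 ≤ w i b) (hw1 : ∀ i, ∑ b, w i b = 1)
    {g h : (Fin n → α) → ℝ} {C : ℝ} (hgh : ∀ x, |g x - h x| ≤ C) :
    |piExpect w g - piExpect w h| ≤ C := by
  have htotal : ∑ x : Fin n → α, ∏ i, w i (x i) = 1 := by
    classical
    rw [← Fintype.prod_sum]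
    simp [hw1]
  rw [piExpect, piExpect, ← sum_sub_distrib]
  calc |∑ x : Fin n → α, ((∏ i, w i (x i)) * g x - (∏ i, w i (x i)) * h x)|
      ≤ ∑ x : Fin n → α, (∏ i, w i (x i)) * C := by
        refine (abs_sum_le_sum_abs _ _).trans (sum_le_sum fun x _ => ?_)
        have hP := prod_nonneg fun i (_ : i ∈ univ) => hw0 i (x i)
        rw [← mul_sub, abs_mul, abs_of_nonneg hP]
        exact mul_le_mul_of_nonneg_left (hgh x) hP
    _ = C := by rw [← sum_mul, htotal, one_mul]

end PiExpect

section McDiarmid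

variable {α : Type*} [Fintype α]

theorem piExpect_exp_mul_le {n : ℕ} {w : Fin n → α → ℝ} (hw0 : ∀ i b, 0 ≤ w i b)
    (hw1 : ∀ i, ∑ b, w i b = 1) {g : (Fin n → α) → ℝ} {D : Fin n → ℝ}
    (hD : ∀ i x b, |g (Function.update x i b) - g x| ≤ D i) (t : ℝ) :
    piExpect w (fun x => exp (t * g x)) ≤ exp (t * piExpect w g + t ^ 2 / 2 * ∑ i, D i ^ 2) := by
  induction n with
  | zero => simp [piExpect]
  | succ n ih =>
    set w' : Fin n → α → ℝ := fun i => w i.succ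
    set mb : α → ℝ := fun b => piExpect w' (fun y => g (Fin.cons b y))
    set R := t ^ 2 / 2 * ∑ i : Fin n, D i.succ ^ 2
    have hcond : ∀ b, piExpect w' (fun y => exp (t * g (Fin.cons b y))) ≤ exp (t * mb b + R) :=
      fun b => ih (fun i => hw0 i.succ) (fun i => hw1 i.succ)
        (fun i y c => by simpa only [Fin.cons_update] using hD i.succ (Fin.cons b y) c)
    have hmb : ∀ b c, |t * mb b - t * mb c| ≤ |t| * D 0 := fun b c => by
      rw [← mul_sub, abs_mul]
      gcongr
      exact abs_piExpect_sub_le (fun i => hw0 i.succ) (fun i => hw1 i.succ)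
        fun y => by simpa only [Fin.update_cons_zero] using hD 0 (Fin.cons c y) b
    have hmean : ∑ b, w 0 b * (t * mb b) = t * piExpect w g := by
      rw [piExpect_cons w g, mul_sum]
      exact sum_congr rfl fun b _ => by ring
    calc piExpect w (fun x => exp (t * g x))
        = ∑ b, w 0 b * piExpect w' (fun y => exp (t * g (Fin.cons b y))) := piExpect_cons _ _
      _ ≤ ∑ b, w 0 b * exp (t * mb b + R) :=
        sum_le_sum fun b _ => mul_le_mul_of_nonneg_left (hcond b) (hw0 0 b)
      _ = (∑ b, w 0 b * exp (t * mb b)) * exp R := by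
        rw [sum_mul]
        exact sum_congr rfl fun b _ => by rw [exp_add, mul_assoc]
      _ ≤ exp (∑ b, w 0 b * (t * mb b) + (|t| * D 0) ^ 2 / 2) * exp R := by
        gcongr
        exact sum_mul_exp_le_exp_sum_mul_add (hw0 0) (hw1 0) hmb
      _ = exp (t * piExpect w g + t ^ 2 / 2 * ∑ i, D i ^ 2) := by
        rw [← exp_add, hmean, Fin.sum_univ_succ, mul_pow, sq_abs]
        congr 1
        ring

end McDiarmid

section Independent

variable {Ω α : Type*} [MeasurableSpace Ω] {μ : Measure Ω} [IsProbabilityMeasure μ]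
  [Fintype α] [MeasurableSpace α] [MeasurableSingletonClass α] {n : ℕ} {W : Fin n → Ω → α}

lemma integrable_comp_pi (hW : ∀ i, Measurable (W i)) (h : (Fin n → α) → ℝ) :
    Integrable (fun ω => h (fun i => W i ω)) μ :=
  (Integrable.of_finite (μ := μ.map fun ω i => W i ω)).comp_measurable (measurable_pi_lambda _ hW)

lemma sum_measureReal_preimage_singleton_eq_one (hW : ∀ i, Measurable (W i)) (i : Fin n) :
    ∑ b, μ.real (W i ⁻¹' {b}) = 1 := by
  rw [sum_measureReal_preimage_singleton _ fun b _ => (hW i) (measurableSet_singleton b)]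
  simp

lemma integral_comp_eq_piExpect (hW : ∀ i, Measurable (W i)) (hindep : iIndepFun W μ)
    (h : (Fin n → α) → ℝ) :
    ∫ ω, h (fun i => W i ω) ∂μ = piExpect (fun i b => μ.real (W i ⁻¹' {b})) h := by
  have hWm : Measurable fun ω i => W i ω := measurable_pi_lambda _ hW
  rw [← integral_map hWm.aemeasurable Integrable.of_finite.aestronglyMeasurable,
    integral_fintype Integrable.of_finite, piExpect]
  refine sum_congr rfl fun x _ => ?_
  have hpre : (fun ω i => W i ω) ⁻¹' {x} = ⋂ i ∈ univ, W i ⁻¹' {x i} := by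
    ext ω
    simp [funext_iff]
  rw [smul_eq_mul, map_measureReal_apply hWm (measurableSet_singleton x), hpre, measureReal_def,
    hindep.measure_inter_preimage_eq_mul _ fun i _ => measurableSet_singleton (x i),
    ENNReal.toReal_prod]
  rfl

theorem hasSubgaussianMGF_comp_sub_integral_of_iIndepFun (hW : ∀ i, Measurable (W i))
    (hindep : iIndepFun W μ) {f : (Fin n → α) → ℝ} {D : Fin n → ℝ}
    (hD : ∀ i x b, |f (Function.update x i b) - f x| ≤ D i) :
    HasSubgaussianMGF (fun ω => f (fun i => W i ω) - ∫ ω', f (fun i => W i ω') ∂μ)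
      (∑ i, D i ^ 2).toNNReal μ where
  integrable_exp_mul t :=
    integrable_comp_pi hW fun x => exp (t * (f x - ∫ ω', f (fun i => W i ω') ∂μ))
  mgf_le t := by
    set m := ∫ ω', f (fun i => W i ω') ∂μ
    have hm : m = piExpect (fun i b => μ.real (W i ⁻¹' {b})) f :=
      integral_comp_eq_piExpect hW hindep f
    have hS : ((∑ i, D i ^ 2).toNNReal : ℝ) = ∑ i, D i ^ 2 :=
      Real.coe_toNNReal _ (sum_nonneg fun i _ => sq_nonneg (D i))
    calc mgf (fun ω => f (fun i => W i ω) - m) μ t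
        = exp (-(t * m)) * ∫ ω, exp (t * f (fun i => W i ω)) ∂μ := by
          rw [mgf, ← integral_const_mul]
          exact integral_congr_ae (ae_of_all _ fun ω => by dsimp only; rw [← exp_add]; ring_nf)
      _ ≤ exp (-(t * m)) * exp (t * m + t ^ 2 / 2 * ∑ i, D i ^ 2) := by
          rw [integral_comp_eq_piExpect hW hindep (fun x => exp (t * f x)), hm]
          gcongr
          exact piExpect_exp_mul_le (fun i b => measureReal_nonneg)
            (sum_measureReal_preimage_singleton_eq_one hW) hD t
      _ = exp ((∑ i, D i ^ 2).toNNReal * t ^ 2 / 2) := by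
          rw [← exp_add, hS]
          ring_nf

end Independent

namespace ProbabilityTheory.HasSubgaussianMGF

variable {Ω : Type*} [MeasurableSpace Ω] {μ : Measure Ω} {X : Ω → ℝ} {c : ℝ≥0}

lemma rpow_mul_integral_abs_rpow_le (h : HasSubgaussianMGF X c μ) {l q : ℝ} (hl : 0 < l)
    (hq : 0 < q) : l ^ q * ∫ ω, |X ω| ^ q ∂μ ≤ (q / exp 1) ^ q * (2 * exp (c * l ^ 2 / 2)) :=
  calc l ^ q * ∫ ω, |X ω| ^ q ∂μ = ∫ ω, l ^ q * |X ω| ^ q ∂μ := (integral_const_mul _ _).symm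
    _ ≤ ∫ ω, (q / exp 1) ^ q * (exp (l * X ω) + exp (-l * X ω)) ∂μ :=
      integral_mono_of_nonneg (ae_of_all _ fun ω => by positivity)
        (((h.integrable_exp_mul l).add (h.integrable_exp_mul (-l))).const_mul _)
        (ae_of_all _ fun ω => by
          simpa only [neg_mul] using rpow_mul_abs_rpow_le_mul_exp_add_exp (z := X ω) hl hq)
    _ = (q / exp 1) ^ q * (mgf X μ l + mgf X μ (-l)) := by
      rw [integral_const_mul, integral_add (h.integrable_exp_mul l) (h.integrable_exp_mul (-l))]
      rfl
    _ ≤ (q / exp 1) ^ q * (exp (c * l ^ 2 / 2) + exp (c * (-l) ^ 2 / 2)) := by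
      gcongr <;> exact h.mgf_le _
    _ = (q / exp 1) ^ q * (2 * exp (c * l ^ 2 / 2)) := by rw [neg_sq]; ring

lemma integral_abs_rpow_le (h : HasSubgaussianMGF X c μ) {q : ℝ} (hq : 0 < q) :
    ∫ ω, |X ω| ^ q ∂μ ≤ 2 * (q * c / exp 1) ^ (q / 2) := by
  rcases eq_zero_or_pos c with rfl | hc
  · have hX : (fun ω => |X ω| ^ q) =ᵐ[μ] 0 :=
      h.ae_eq_zero_of_hasSubgaussianMGF_zero.mono fun ω hω => by simp [hω, zero_rpow hq.ne']
    simp [integral_congr_ae hX, zero_rpow (half_pos hq).ne']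
  have hqc : 0 < q / c := div_pos hq (NNReal.coe_pos.2 hc)
  have hl : 0 < sqrt (q / c) := sqrt_pos.2 hqc
  have hmoment := h.rpow_mul_integral_abs_rpow_le hl hq
  have hexp : exp (c * sqrt (q / c) ^ 2 / 2) = exp 1 ^ (q / 2) := by
    rw [sq_sqrt hqc.le, exp_one_rpow]
    field_simp
  have hlq : sqrt (q / c) ^ q = (q / c) ^ (q / 2) := by
    rw [sqrt_eq_rpow, ← rpow_mul hqc.le]
    ring_nf
  have hsq : (q / exp 1) ^ q = ((q / exp 1) ^ 2) ^ (q / 2) := by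
    rw [← rpow_natCast, ← rpow_mul (by positivity)]
    ring_nf
  have hrhs : (q / exp 1) ^ q * (2 * exp (c * sqrt (q / c) ^ 2 / 2)) =
      sqrt (q / c) ^ q * (2 * (q * c / exp 1) ^ (q / 2)) := by
    rw [hexp, hlq, hsq, mul_left_comm, ← mul_rpow (by positivity) (by positivity),
      mul_left_comm, ← mul_rpow (by positivity) (by positivity)]
    congr 2
    field_simp
  exact le_of_mul_le_mul_left (hmoment.trans_eq hrhs) (rpow_pos_of_pos hl q)

lemma integral_abs_rpow_rpow_le (h : HasSubgaussianMGF X c μ) {q : ℝ} (hq : 1 ≤ q) :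
    (∫ ω, |X ω| ^ q ∂μ) ^ (1 / q) ≤ sqrt (π * q / 2) * sqrt c := by
  have hq0 : 0 < q := one_pos.trans_le hq
  have hqc : 0 ≤ q * c := mul_nonneg hq0.le c.2
  have hpi_e : 8 ≤ π * exp 1 := by nlinarith [pi_gt_d2, exp_one_gt_d9]
  calc (∫ ω, |X ω| ^ q ∂μ) ^ (1 / q) ≤ (2 * (q * c / exp 1) ^ (q / 2)) ^ (1 / q) :=
        rpow_le_rpow (integral_nonneg fun ω => by positivity) (h.integral_abs_rpow_le hq0)
          (by positivity)
    _ = 2 ^ (1 / q) * sqrt (q * c / exp 1) := by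
        rw [mul_rpow (by norm_num) (by positivity), ← rpow_mul (by positivity), sqrt_eq_rpow]
        congr 2
        field_simp
    _ ≤ 2 * sqrt (q * c / exp 1) := by
        gcongr
        calc (2 : ℝ) ^ (1 / q) ≤ 2 ^ (1 : ℝ) :=
              rpow_le_rpow_of_exponent_le (by norm_num) ((div_le_one hq0).2 hq)
          _ = 2 := rpow_one 2
    _ ≤ sqrt (π * q / 2) * sqrt c := by
        rw [← sqrt_mul (by positivity), le_sqrt (by positivity) (by positivity), mul_pow,
          sq_sqrt (by positivity), mul_div_assoc', div_le_iff₀ (exp_pos 1)]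
        nlinarith

end ProbabilityTheory.HasSubgaussianMGF

lemma abs_sub_update_le_of_flip {ι : Type*} [DecidableEq ι] {f : (ι → Bool) → ℝ} {i : ι} {d : ℝ}
    (h : ∀ x, |f x - f (Function.update x i (!x i))| ≤ d) (x : ι → Bool) (b : Bool) :
    |f (Function.update x i b) - f x| ≤ d := by
  by_cases hb : b = x i
  · rw [hb, Function.update_eq_self, sub_self, abs_zero]
    exact (abs_nonneg _).trans (h x)
  · rw [Bool.eq_not_iff.2 hb, abs_sub_comm]
    exact h x

/-- Moment bound from the method of bounded differences:
`‖f(W) - E f(W)‖_q ≤ sqrt(π q / 2) ‖Δf‖₂` for independent Bernoulli coordinates. -/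
theorem stmt_3 {Ω : Type*} [MeasureSpace Ω] [IsProbabilityMeasure (ℙ : Measure Ω)]
    {n : ℕ} (W : Fin n → Ω → Bool) (hmeas : ∀ i, Measurable (W i))
    (hindep : iIndepFun W ℙ)
    (f : (Fin n → Bool) → ℝ)
    (Δ : Fin n → ℝ)
    (hΔ : ∀ i, Δ i = ⨆ x : Fin n → Bool, |f x - f (Function.update x i (!x i))|)
    (q : ℝ) (hq : 1 ≤ q) :
    (∫ ω, |f (fun i => W i ω) - ∫ ω', f (fun i => W i ω') ∂ℙ| ^ q ∂ℙ) ^ (1 / q)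
      ≤ Real.sqrt (Real.pi * q / 2) * Real.sqrt (∑ i, Δ i ^ 2) := by
  have hD : ∀ i x b, |f (Function.update x i b) - f x| ≤ Δ i := fun i =>
    abs_sub_update_le_of_flip fun x => by
      rw [hΔ i]
      exact le_ciSup (f := fun y => |f y - f (Function.update y i (!y i))|)
        (Set.finite_range _).bddAbove x
  have hX := hasSubgaussianMGF_comp_sub_integral_of_iIndepFun hmeas hindep hD
  simpa only [Real.coe_toNNReal _ (sum_nonneg fun i _ => sq_nonneg (Δ i))] using
    hX.integral_abs_rpow_rpow_le hq
end

section
/- Let f ∈ C²([0,1]^n) and let W_1,…,W_n be independent random variables taking values in [0,1] with means p_i = E W_i. Then |E f(W) − f(p)| ≤ (1/2) Σ_{i=1}^n ‖∂_i² f‖_∞, where p = (p_1,…,p_n). -/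
/-
Lindeberg replacement: replace the coordinates `W i` by their means one at a time. A single
replacement, of `Y = W k` by `μ[Y]` with the other coordinates fixed at `X`, changes `𝔼 f` by the
mean of the first-order term `∂ₖ f(X) (Y - μ[Y])` plus a second-order Taylor remainder. The first
term has mean zero because `X` is built from the `W j` with `j ≠ k` and is therefore independent
of `Y`; the remainder is at most `Mₖ / 2 (bₖ - aₖ)²` pointwise.
-/

open MeasureTheory ProbabilityTheory Set Function

theorem abs_sub_sub_deriv_mul_sub_le {g : ℝ → ℝ} (hg : ContDiff ℝ 2 g)
    {a b C : ℝ} (hC : ∀ s ∈ uIcc a b, |deriv (deriv g) s| ≤ C) :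
    |g b - g a - deriv g a * (b - a)| ≤ C / 2 * (b - a) ^ 2 := by
  rcases eq_or_ne a b with rfl | hab
  · simp
  obtain ⟨ξ, hξ, hrem⟩ := taylor_mean_remainder_lagrange_iteratedDeriv (n := 1) hab hg.contDiffOn
  have hderiv : derivWithin g (uIcc a b) a = deriv g a :=
    (hg.differentiable two_ne_zero).differentiableAt.derivWithin
      (uniqueDiffOn_uIcc hab a left_mem_uIcc)
  norm_num [taylorWithinEval_succ, iteratedDerivWithin_one, hderiv, iteratedDeriv_succ] at hrem
  rw [show g b - g a - deriv g a * (b - a) = deriv (deriv g) ξ * (b - a) ^ 2 / 2 by linarith,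
    abs_div, abs_mul, abs_two, abs_sq, div_mul_eq_mul_div]
  gcongr
  exact hC ξ (uIoo_subset_uIcc_self hξ)

theorem integrable_comp_of_forall_mem_isCompact {Ω E F : Type*} [MeasurableSpace Ω]
    {μ : Measure Ω} [IsFiniteMeasure μ] [TopologicalSpace E] [NormedAddCommGroup F]
    {K : Set E} (hK : IsCompact K) {g : E → F} (hg : Continuous g) {X : Ω → E}
    (hX : AEStronglyMeasurable X μ) (hXK : ∀ ω, X ω ∈ K) :
    Integrable (fun ω => g (X ω)) μ := by
  obtain ⟨C, hC⟩ := hK.exists_bound_of_continuousOn hg.continuousOn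
  exact .of_bound (hg.comp_aestronglyMeasurable hX) C (ae_of_all _ fun ω => hC _ (hXK ω))

theorem ProbabilityTheory.iIndepFun.indepFun_of_measurable_iSup_compl {Ω ι β γ : Type*}
    [MeasurableSpace Ω] {μ : Measure Ω} [MeasurableSpace β] [MeasurableSpace γ] {W : ι → Ω → β}
    (hW : iIndepFun W μ) (hmeas : ∀ i, Measurable (W i)) (k : ι) {X : Ω → γ}
    (hX : Measurable[⨆ j ∈ ({k}ᶜ : Set ι), MeasurableSpace.comap (W j) ‹_›] X) :
    IndepFun X (W k) μ := by
  rw [IndepFun_iff_Indep]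
  have h := indep_iSup_of_disjoint (fun j => (hmeas j).comap_le)
    ((iIndepFun_iff_iIndep _ _ _).1 hW) (disjoint_compl_left (a := ({k} : Set ι)))
  exact indep_of_indep_of_le h hX.comap_le (le_iSup₂_of_le k (mem_singleton k) le_rfl)

theorem update_mem_Icc {ι : Type*} [DecidableEq ι] {α : ι → Type*} [∀ i, Preorder (α i)]
    {a b x : ∀ i, α i} {i : ι} {s : α i} (hx : x ∈ Icc a b) (hs : s ∈ Icc (a i) (b i)) :
    update x i s ∈ Icc a b := by
  rw [← pi_univ_Icc] at hx ⊢
  exact (update_mem_pi_iff_of_mem hx).2 fun _ => hs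

theorem measurable_piecewise_iSup_compl {ι Ω β : Type*} [DecidableEq ι] [MeasurableSpace β]
    (W : ι → Ω → β) (p : ι → β) (S : Finset ι) :
    Measurable[⨆ j ∈ (↑S : Set ι)ᶜ, MeasurableSpace.comap (W j) inferInstance]
      fun ω => S.piecewise p fun j => W j ω := by
  refine @measurable_pi_lambda _ _ _ (_) _ _ fun j => ?_
  by_cases hj : j ∈ S
  · simp only [Finset.piecewise_eq_of_mem _ _ _ hj]
    exact measurable_const
  · simp only [Finset.piecewise_eq_of_notMem _ _ _ hj]
    exact Measurable.of_comap_le (le_iSup₂ (f := fun j _ => MeasurableSpace.comap (W j) _) j hj)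

section Box

variable {ι : Type*} [Fintype ι] [DecidableEq ι]

theorem hasDerivAt_comp_update {f : (ι → ℝ) → ℝ} (hf : Differentiable ℝ f) (x : ι → ℝ)
    (i : ι) (t : ℝ) :
    HasDerivAt (fun s => f (update x i s)) (fderiv ℝ f (update x i t) (Pi.single i 1)) t :=
  (hf _).hasFDerivAt.comp_hasDerivAt t (hasDerivAt_update x i t)

variable {f : (ι → ℝ) → ℝ} {a b : ι → ℝ} {i : ι} {C : ℝ}

theorem abs_sub_sub_fderiv_update_le (hf : ContDiff ℝ 2 f)
    (hC : ∀ y ∈ Icc a b, |deriv (deriv fun t => f (update y i t)) (y i)| ≤ C)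
    {x : ι → ℝ} (hx : x ∈ Icc a b) {q s : ℝ} (hq : q ∈ Icc (a i) (b i))
    (hs : s ∈ Icc (a i) (b i)) :
    |f (update x i s) - f (update x i q) - fderiv ℝ f (update x i q) (Pi.single i 1) * (s - q)|
      ≤ C / 2 * (s - q) ^ 2 := by
  have hline := abs_sub_sub_deriv_mul_sub_le (g := fun t => f (update x i t))
    (hf.comp (contDiff_update 2 x i)) (a := q) (b := s) (C := C) fun u hu => by
      simpa using hC _ (update_mem_Icc hx (uIcc_subset_Icc hq hs hu))
  rwa [(hasDerivAt_comp_update (hf.differentiable two_ne_zero) x i q).deriv] at hline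

theorem abs_integral_update_sub_integral_update_le {Ω : Type*} [MeasurableSpace Ω]
    {μ : Measure Ω} [IsProbabilityMeasure μ] (hf : ContDiff ℝ 2 f)
    (hC : ∀ y ∈ Icc a b, |deriv (deriv fun t => f (update y i t)) (y i)| ≤ C)
    {X : Ω → ι → ℝ} {Y : Ω → ℝ} (hXm : Measurable X) (hYm : Measurable Y)
    (hXY : IndepFun X Y μ) (hX : ∀ ω, X ω ∈ Icc a b) (hY : ∀ ω, Y ω ∈ Icc (a i) (b i)) :
    |∫ ω, f (update (X ω) i (Y ω)) ∂μ - ∫ ω, f (update (X ω) i (μ[Y])) ∂μ|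
      ≤ C / 2 * (b i - a i) ^ 2 := by
  set q := μ[Y]
  have hYint : Integrable Y μ :=
    integrable_comp_of_forall_mem_isCompact isCompact_Icc continuous_id
      hYm.aestronglyMeasurable hY
  have hq : q ∈ Icc (a i) (b i) :=
    (convex_Icc _ _).integral_mem isClosed_Icc (ae_of_all _ hY) hYint
  have hint : ∀ c : Ω → ℝ, Measurable c → (∀ ω, c ω ∈ Icc (a i) (b i)) →
      Integrable (fun ω => f (update (X ω) i (c ω))) μ := fun c hc hcmem =>
    integrable_comp_of_forall_mem_isCompact isCompact_Icc hf.continuous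
      (measurable_update'.comp (hXm.prodMk hc)).aestronglyMeasurable
      fun ω => update_mem_Icc (hX ω) (hcmem ω)
  set D : (ι → ℝ) → ℝ := fun x => fderiv ℝ f (update x i q) (Pi.single i 1)
  have hD : Continuous D :=
    ((hf.continuous_fderiv two_ne_zero).comp (continuous_id.update i continuous_const)).clm_apply
      continuous_const
  have hDint : Integrable (fun ω => D (X ω) * (Y ω - q)) μ :=
    integrable_comp_of_forall_mem_isCompact (g := fun z : (ι → ℝ) × ℝ => D z.1 * (z.2 - q))
      (isCompact_Icc.prod isCompact_Icc) (by fun_prop) (hXm.prodMk hYm).aestronglyMeasurable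
      fun ω => ⟨hX ω, hY ω⟩
  have hind : IndepFun (fun ω => D (X ω)) (fun ω => Y ω - q) μ :=
    hXY.comp hD.measurable (measurable_sub_const q)
  have hlin : ∫ ω, D (X ω) * (Y ω - q) ∂μ = 0 := by
    rw [hind.integral_fun_mul_eq_mul_integral (hD.measurable.comp hXm).aestronglyMeasurable
      (hYm.sub_const q).aestronglyMeasurable, integral_sub hYint (integrable_const q)]
    simp [q]
  have hbound : ∀ ω, ‖f (update (X ω) i (Y ω)) - f (update (X ω) i q) - D (X ω) * (Y ω - q)‖
      ≤ C / 2 * (b i - a i) ^ 2 := fun ω => by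
    have hC0 : 0 ≤ C := (abs_nonneg _).trans (hC _ (hX ω))
    refine (abs_sub_sub_fderiv_update_le hf hC (hX ω) hq (hY ω)).trans ?_
    exact mul_le_mul_of_nonneg_left (sq_le_sq' (by linarith [(hY ω).1, hq.2])
      (by linarith [(hY ω).2, hq.1])) (by positivity)
  calc _ = |∫ ω, (f (update (X ω) i (Y ω)) - f (update (X ω) i q) - D (X ω) * (Y ω - q)) ∂μ| :=
        by
        rw [integral_sub (f := fun ω => f (update (X ω) i (Y ω)) - f (update (X ω) i q))
          ((hint _ hYm hY).sub (hint _ measurable_const fun _ => hq)) hDint,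
          integral_sub (hint _ hYm hY) (hint _ measurable_const fun _ => hq), hlin, sub_zero]
    _ ≤ C / 2 * (b i - a i) ^ 2 := by
      simpa using norm_integral_le_of_norm_le_const (μ := μ) (ae_of_all _ hbound)

end Box

section Lindeberg

variable {ι Ω : Type*} [Fintype ι] [DecidableEq ι] [MeasurableSpace Ω] {μ : Measure Ω}
  [IsProbabilityMeasure μ] {W : ι → Ω → ℝ} {a b : ι → ℝ} {f : (ι → ℝ) → ℝ} {M : ι → ℝ}

theorem abs_integral_sub_integral_piecewise_le (hmeas : ∀ i, Measurable (W i))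
    (hW : ∀ i ω, W i ω ∈ Icc (a i) (b i)) (hindep : iIndepFun W μ) (hf : ContDiff ℝ 2 f)
    (hM : ∀ i, ∀ x ∈ Icc a b, |deriv (deriv fun t => f (update x i t)) (x i)| ≤ M i)
    (S : Finset ι) :
    |∫ ω, f (fun i => W i ω) ∂μ - ∫ ω, f (S.piecewise (fun i => μ[W i]) fun i => W i ω) ∂μ|
      ≤ 1 / 2 * ∑ i ∈ S, M i * (b i - a i) ^ 2 := by
  set p : ι → ℝ := fun i => μ[W i]
  have hp (i : ι) : p i ∈ Icc (a i) (b i) :=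
    (convex_Icc _ _).integral_mem isClosed_Icc (ae_of_all _ (hW i))
      (integrable_comp_of_forall_mem_isCompact isCompact_Icc continuous_id
        (hmeas i).aestronglyMeasurable (hW i))
  have hhybrid (T : Finset ι) (ω : Ω) : T.piecewise p (fun i => W i ω) ∈ Icc a b := by
    rw [← pi_univ_Icc]
    exact T.piecewise_mem_set_pi (fun i _ => hp i) fun i _ => hW i ω
  induction S using Finset.induction_on with
  | empty => simp
  | insert k S hk ih =>
    set X := fun ω => (insert k S).piecewise p fun i => W i ω
    have hXm := measurable_piecewise_iSup_compl W p (insert k S)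
    have hXY : IndepFun X (W k) μ := hindep.indepFun_of_measurable_iSup_compl hmeas k
      (hXm.mono (biSup_mono fun j hj hjk => hj (by simp [mem_singleton_iff.1 hjk])) le_rfl)
    have h1 : ∀ ω, update (X ω) k (W k ω) = S.piecewise p fun i => W i ω := by
      simp [X, Finset.piecewise_insert, hk]
    have h2 : ∀ ω, update (X ω) k (μ[W k]) = X ω := fun ω =>
      update_eq_self_iff.mpr (Finset.piecewise_eq_of_mem _ p _ (Finset.mem_insert_self k S)).symm
    have hstep : |∫ ω, f (update (X ω) k (W k ω)) ∂μ - ∫ ω, f (update (X ω) k (μ[W k])) ∂μ|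
        ≤ M k / 2 * (b k - a k) ^ 2 :=
      abs_integral_update_sub_integral_update_le hf (hM k)
        (hXm.mono (iSup₂_le fun j _ => (hmeas j).comap_le) le_rfl) (hmeas k) hXY
        (hhybrid _) (hW k)
    simp only [h1, h2] at hstep
    rw [Finset.sum_insert hk]
    linarith [abs_sub_le (∫ ω, f (fun i => W i ω) ∂μ) (∫ ω, f (S.piecewise p fun i => W i ω) ∂μ)
      (∫ ω, f (X ω) ∂μ)]

theorem abs_integral_comp_sub_comp_integral_le (hmeas : ∀ i, Measurable (W i))
    (hW : ∀ i ω, W i ω ∈ Icc (a i) (b i)) (hindep : iIndepFun W μ) (hf : ContDiff ℝ 2 f)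
    (hM : ∀ i, ∀ x ∈ Icc a b, |deriv (deriv fun t => f (update x i t)) (x i)| ≤ M i) :
    |∫ ω, f (fun i => W i ω) ∂μ - f (fun i => μ[W i])| ≤ 1 / 2 * ∑ i, M i * (b i - a i) ^ 2 := by
  simpa using abs_integral_sub_integral_piecewise_le hmeas hW hindep hf hM Finset.univ

end Lindeberg

/-- Lindeberg replacement bound: `|E f(W) - f(p)| ≤ (1/2) Σ_i ‖∂_i² f‖_∞` for
independent `[0,1]`-valued `W_i` with means `p_i` and `f ∈ C²`. -/
theorem stmt_4 {Ω : Type*} [MeasureSpace Ω] [IsProbabilityMeasure (ℙ : Measure Ω)]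
    {n : ℕ} (W : Fin n → Ω → ℝ) (hmeas : ∀ i, Measurable (W i))
    (hrange : ∀ i ω, W i ω ∈ Set.Icc (0 : ℝ) 1)
    (hindep : iIndepFun W ℙ)
    (f : (Fin n → ℝ) → ℝ) (hf : ContDiff ℝ 2 f)
    (p : Fin n → ℝ) (hp : ∀ i, p i = ∫ ω, W i ω ∂ℙ)
    (M : Fin n → ℝ)
    (hM : ∀ i, ∀ x ∈ Set.Icc (0 : Fin n → ℝ) 1,
      |deriv (deriv (fun t => f (Function.update x i t))) (x i)| ≤ M i) :
    |(∫ ω, f (fun i => W i ω) ∂ℙ) - f p| ≤ (1 / 2) * ∑ i, M i := by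
  obtain rfl : p = fun i => ∫ ω, W i ω ∂ℙ := funext hp
  simpa using abs_integral_comp_sub_comp_integral_le (a := 0) (b := 1) hmeas hrange hindep hf hM
end

section
/- Let W_1,…,W_n be independent {0,1}-valued random variables and f: {0,1}^n → ℝ. Then ‖f(W) − E f(W)‖_Ψ ≤ √(3/2) ‖Δf‖₂, where Ψ(x) = e^{x²} − 1, ‖·‖_Ψ is the associated Orlicz norm, and ‖Δf‖₂² = Σ_{i=1}^n ‖Δ_i f‖_∞². -/
/-!
Bounded differences make `f - E f` sub-Gaussian with variance proxy `‖Δf‖₂² / 4`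
(McDiarmid): integrate out one coordinate at a time, applying Hoeffding's lemma to the
coordinate being integrated and induction to the averaged function, which again has
bounded differences. The `ψ₂` bound then comes from the Gaussian linearisation
`√π exp v² = ∫ exp (2 v g - g²) dg`: exchanging the two integrals bounds
`E exp ((f - E f)² / t²)` by the Gaussian integral `(1 - ‖Δf‖₂² / (2 t²))^(-1/2)`,
which is at most `2` as soon as `3 t² > 2 ‖Δf‖₂²`.
-/

open MeasureTheory ProbabilityTheory Real
open scoped ENNReal NNReal

lemma exp_two_mul_mul_sub_sq (v g : ℝ) :
    exp (2 * v * g - g ^ 2) = exp (v ^ 2) * exp (-1 * (g - v) ^ 2) := by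
  rw [← exp_add]; ring_nf

lemma integral_exp_two_mul_mul_sub_sq (v : ℝ) :
    ∫ g : ℝ, exp (2 * v * g - g ^ 2) = √π * exp (v ^ 2) := by
  simp_rw [exp_two_mul_mul_sub_sq]
  rw [integral_const_mul, integral_sub_right_eq_self (fun g => exp (-1 * g ^ 2)) v,
    integral_gaussian, div_one, mul_comm]

lemma exp_two_mul_div_mul_sub_sq (x t g : ℝ) :
    exp (2 * (x / t) * g - g ^ 2) = exp (2 * g / t * x) * exp (-g ^ 2) := by
  rw [← exp_add]; ring_nf

lemma one_sub_div_pos_of_nonneg_of_lt {a b : ℝ} (ha : 0 ≤ a) (hab : a < b) : 0 < 1 - a / b :=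
  sub_pos.2 ((div_lt_one (ha.trans_lt hab)).2 hab)

noncomputable def expSqOrliczNorm {Ω : Type*} [MeasurableSpace Ω] (X : Ω → ℝ) (μ : Measure Ω) : ℝ :=
  sInf {t : ℝ | 0 < t ∧ Integrable (fun ω => exp ((X ω / t) ^ 2) - 1) μ ∧
    ∫ ω, (exp ((X ω / t) ^ 2) - 1) ∂μ ≤ 1}

namespace ProbabilityTheory.HasSubgaussianMGF

variable {Ω : Type*} [MeasurableSpace Ω] {μ : Measure Ω} {X : Ω → ℝ} {c : ℝ≥0}

lemma integral_exp_two_mul_div_mul_sub_sq_le (h : HasSubgaussianMGF X c μ) (t g : ℝ) :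
    ∫ ω, exp (2 * (X ω / t) * g - g ^ 2) ∂μ ≤ exp (-(1 - 2 * c / t ^ 2) * g ^ 2) := by
  simp_rw [exp_two_mul_div_mul_sub_sq]
  rw [integral_mul_const]
  calc mgf X μ (2 * g / t) * exp (-g ^ 2)
      ≤ exp (c * (2 * g / t) ^ 2 / 2) * exp (-g ^ 2) := by gcongr; exact h.mgf_le _
    _ = exp (-(1 - 2 * c / t ^ 2) * g ^ 2) := by rw [← exp_add]; ring_nf

lemma integrable_prod_exp_two_mul_div_mul_sub_sq [IsFiniteMeasure μ]
    (h : HasSubgaussianMGF X c μ) {t : ℝ} (ht : 2 * c < t ^ 2) :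
    Integrable (fun p : ℝ × Ω => exp (2 * (X p.2 / t) * p.1 - p.1 ^ 2)) (volume.prod μ) := by
  have hmeas : AEStronglyMeasurable (fun p : ℝ × Ω => exp (2 * (X p.2 / t) * p.1 - p.1 ^ 2))
      (volume.prod μ) := by
    have hX := h.aemeasurable.comp_snd (μ := (volume : Measure ℝ))
    refine (measurable_exp.comp_aemeasurable ?_).aestronglyMeasurable
    exact (((hX.div_const t).const_mul 2).mul measurable_fst.aemeasurable).sub
      (measurable_fst.pow_const 2).aemeasurable
  refine (integrable_prod_iff hmeas).2 ⟨ae_of_all _ fun g => ?_, ?_⟩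
  · simp_rw [exp_two_mul_div_mul_sub_sq]
    exact (h.integrable_exp_mul _).mul_const _
  · have hb := one_sub_div_pos_of_nonneg_of_lt (by positivity) ht
    refine (integrable_exp_neg_mul_sq hb).mono' hmeas.norm.integral_prod_right' (ae_of_all _ ?_)
    intro g
    simp only [norm_of_nonneg (exp_nonneg _),
      norm_of_nonneg (integral_nonneg fun _ => exp_nonneg _)]
    exact h.integral_exp_two_mul_div_mul_sub_sq_le t g

theorem integrable_exp_sq_div [IsFiniteMeasure μ] (h : HasSubgaussianMGF X c μ) {t : ℝ}
    (ht : 2 * c < t ^ 2) : Integrable (fun ω => exp ((X ω / t) ^ 2)) μ := by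
  have := ((h.integrable_prod_exp_two_mul_div_mul_sub_sq ht).integral_prod_right).const_mul
    (√π)⁻¹
  simp_rw [integral_exp_two_mul_mul_sub_sq, ← mul_assoc,
    inv_mul_cancel₀ (sqrt_pos.2 pi_pos).ne', one_mul] at this
  exact this

theorem integral_exp_sq_div_le [IsFiniteMeasure μ] (h : HasSubgaussianMGF X c μ) {t : ℝ}
    (ht : 2 * c < t ^ 2) : ∫ ω, exp ((X ω / t) ^ 2) ∂μ ≤ 1 / √(1 - 2 * c / t ^ 2) := by
  have hF := h.integrable_prod_exp_two_mul_div_mul_sub_sq ht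
  have hb := one_sub_div_pos_of_nonneg_of_lt (by positivity) ht
  refine le_of_mul_le_mul_left ?_ (sqrt_pos.2 pi_pos)
  calc √π * ∫ ω, exp ((X ω / t) ^ 2) ∂μ
      = ∫ ω, (∫ g, exp (2 * (X ω / t) * g - g ^ 2)) ∂μ := by
        rw [← integral_const_mul]; simp_rw [integral_exp_two_mul_mul_sub_sq]
    _ = ∫ g, ∫ ω, exp (2 * (X ω / t) * g - g ^ 2) ∂μ := by
        rw [← integral_prod_symm _ hF, integral_prod _ hF]
    _ ≤ ∫ g, exp (-(1 - 2 * c / t ^ 2) * g ^ 2) :=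
        integral_mono hF.integral_prod_left (integrable_exp_neg_mul_sq hb)
          (h.integral_exp_two_mul_div_mul_sub_sq_le t)
    _ = √π * (1 / √(1 - 2 * c / t ^ 2)) := by
        rw [integral_gaussian, sqrt_div' _ hb.le, mul_one_div]

theorem integral_exp_sq_div_sub_one_le_one [IsProbabilityMeasure μ]
    (h : HasSubgaussianMGF X c μ) {t : ℝ} (ht : 8 * c < 3 * t ^ 2) :
    ∫ ω, (exp ((X ω / t) ^ 2) - 1) ∂μ ≤ 1 := by
  have hc : 2 * c < t ^ 2 := by linarith [c.coe_nonneg]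
  have hquarter : (1 / 2) ^ 2 ≤ 1 - 2 * c / t ^ 2 := by
    rw [le_sub_comm, div_le_iff₀ (by linarith [c.coe_nonneg])]; linarith
  rw [integral_sub (h.integrable_exp_sq_div hc) (integrable_const 1)]
  calc ∫ ω, exp ((X ω / t) ^ 2) ∂μ - ∫ _, 1 ∂μ ≤ 1 / √(1 - 2 * c / t ^ 2) - 1 := by
        simpa using h.integral_exp_sq_div_le hc
    _ ≤ 1 / √((1 / 2) ^ 2) - 1 := by gcongr
    _ = 1 := by rw [sqrt_sq (by norm_num)]; norm_num

theorem expSqOrliczNorm_le [IsProbabilityMeasure μ] (h : HasSubgaussianMGF X c μ) {t₀ : ℝ}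
    (ht₀ : 0 ≤ t₀) (hc : 8 * c ≤ 3 * t₀ ^ 2) : expSqOrliczNorm X μ ≤ t₀ := by
  refine le_of_forall_pos_le_add fun ε hε => csInf_le ⟨0, fun t ht => ht.1.le⟩ ?_
  have ht : 8 * c < 3 * (t₀ + ε) ^ 2 := by nlinarith
  exact ⟨by positivity, (h.integrable_exp_sq_div (by nlinarith)).sub (integrable_const 1),
    h.integral_exp_sq_div_sub_one_le_one ht⟩

end ProbabilityTheory.HasSubgaussianMGF

section FiniteAlphabet

variable {α : Type*} [MeasurableSpace α] [MeasurableSingletonClass α] [Finite α]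

lemma hasSubgaussianMGF_sub_integral_of_abs_sub_le (ρ : Measure α) [IsProbabilityMeasure ρ]
    (Y : α → ℝ) (d : ℝ≥0) (hY : ∀ a b, |Y a - Y b| ≤ d) :
    HasSubgaussianMGF (fun a => Y a - ∫ b, Y b ∂ρ) ((d / 2) ^ 2) ρ := by
  have := nonempty_of_isProbabilityMeasure ρ
  obtain ⟨a₀, ha₀⟩ := Finite.exists_min Y
  have hIcc : ∀ᵐ a ∂ρ, Y a ∈ Set.Icc (Y a₀) (Y a₀ + d) :=
    ae_of_all _ fun a => ⟨ha₀ a, by linarith [(abs_le.1 (hY a a₀)).2]⟩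
  simpa using hasSubgaussianMGF_of_mem_Icc (measurable_of_finite Y).aemeasurable hIcc

lemma integral_pi_fin_succ {n : ℕ} (ν : Fin (n + 1) → Measure α) [∀ i, IsFiniteMeasure (ν i)]
    (F : (Fin (n + 1) → α) → ℝ) :
    ∫ x, F x ∂Measure.pi ν =
      ∫ y, (∫ a, F (Fin.cons a y) ∂ν 0) ∂Measure.pi (fun j => ν j.succ) := by
  rw [← ((measurePreserving_piFinSuccAbove ν 0).symm).integral_comp',
    integral_prod_symm _ Integrable.of_finite]
  simp_rw [MeasurableEquiv.piFinSuccAbove_symm_apply, Fin.insertNthEquiv, Equiv.coe_fn_mk,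
    Fin.insertNth_zero, Fin.zero_succAbove, cast_eq]

def HasBoundedDifferences {n : ℕ} (f : (Fin n → α) → ℝ) (Δ : Fin n → ℝ≥0) : Prop :=
  ∀ x i a, |f (Function.update x i a) - f x| ≤ Δ i

namespace HasBoundedDifferences

variable {n : ℕ}

lemma integral_cons {f : (Fin (n + 1) → α) → ℝ} {Δ : Fin (n + 1) → ℝ≥0}
    (hf : HasBoundedDifferences f Δ) (ρ : Measure α) [IsProbabilityMeasure ρ] :
    HasBoundedDifferences (fun y => ∫ a, f (Fin.cons a y) ∂ρ) (fun i => Δ i.succ) := by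
  intro y i b
  rw [← integral_sub Integrable.of_finite Integrable.of_finite]
  have hcons (a : α) :
      ‖f (Fin.cons a (Function.update y i b)) - f (Fin.cons a y)‖ ≤ Δ i.succ := by
    rw [Fin.cons_update]; exact hf _ _ _
  simpa using norm_integral_le_of_norm_le_const (ae_of_all ρ hcons)

lemma mgf_sub_integral_pi_le {f : (Fin n → α) → ℝ} {Δ : Fin n → ℝ≥0}
    (hf : HasBoundedDifferences f Δ) (ν : Fin n → Measure α) [∀ i, IsProbabilityMeasure (ν i)]
    (l : ℝ) :
    mgf (fun x => f x - ∫ y, f y ∂Measure.pi ν) (Measure.pi ν) l ≤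
      exp ((∑ i, (Δ i / 2) ^ 2 : ℝ≥0) * l ^ 2 / 2) := by
  induction n with
  | zero =>
    have hconst (x : Fin 0 → α) : f x - ∫ y, f y ∂Measure.pi ν = 0 := by
      simp [Subsingleton.elim _ x]
    simp [mgf, hconst]
  | succ n ih =>
    set m := ∫ y, f y ∂Measure.pi ν
    set g : (Fin n → α) → ℝ := fun y => ∫ a, f (Fin.cons a y) ∂ν 0
    have hg_int : ∫ y, g y ∂Measure.pi (fun j => ν j.succ) = m :=
      (integral_pi_fin_succ ν f).symm
    have hg := ih (hf.integral_cons (ν 0)) (fun j => ν j.succ)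
    rw [hg_int] at hg
    have hoeff (y : Fin n → α) :
        mgf (fun a => f (Fin.cons a y) - g y) (ν 0) l ≤
          exp ((Δ 0 / 2 : ℝ≥0) ^ 2 * l ^ 2 / 2) := by
      refine (hasSubgaussianMGF_sub_integral_of_abs_sub_le (ν 0) _ (Δ 0) fun a b => ?_).mgf_le l
      simpa using hf (Fin.cons b y) 0 a
    calc mgf (fun x => f x - m) (Measure.pi ν) l
        = ∫ y, exp (l * (g y - m)) * mgf (fun a => f (Fin.cons a y) - g y) (ν 0) l
            ∂Measure.pi (fun j => ν j.succ) := by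
          rw [mgf, integral_pi_fin_succ]
          congr 1 with y
          rw [mgf, ← integral_const_mul]
          congr 1 with a
          rw [← exp_add]; ring_nf
      _ ≤ ∫ y, exp (l * (g y - m)) * exp ((Δ 0 / 2 : ℝ≥0) ^ 2 * l ^ 2 / 2)
            ∂Measure.pi (fun j => ν j.succ) :=
          integral_mono Integrable.of_finite Integrable.of_finite
            fun y => mul_le_mul_of_nonneg_left (hoeff y) (exp_nonneg _)
      _ = mgf (fun y => g y - m) (Measure.pi (fun j => ν j.succ)) l *
            exp ((Δ 0 / 2 : ℝ≥0) ^ 2 * l ^ 2 / 2) := integral_mul_const _ _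
      _ ≤ exp ((∑ i : Fin n, (Δ i.succ / 2) ^ 2 : ℝ≥0) * l ^ 2 / 2) *
            exp ((Δ 0 / 2 : ℝ≥0) ^ 2 * l ^ 2 / 2) := by gcongr
      _ = exp ((∑ i, (Δ i / 2) ^ 2 : ℝ≥0) * l ^ 2 / 2) := by
          rw [← exp_add, Fin.sum_univ_succ]; push_cast; ring_nf

theorem hasSubgaussianMGF_sub_integral_pi {f : (Fin n → α) → ℝ} {Δ : Fin n → ℝ≥0}
    (hf : HasBoundedDifferences f Δ) (ν : Fin n → Measure α) [∀ i, IsProbabilityMeasure (ν i)] :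
    HasSubgaussianMGF (fun x => f x - ∫ y, f y ∂Measure.pi ν) (∑ i, (Δ i / 2) ^ 2)
      (Measure.pi ν) :=
  ⟨fun _ => Integrable.of_finite, hf.mgf_sub_integral_pi_le ν⟩

theorem hasSubgaussianMGF_comp_sub_integral {Ω : Type*} [MeasurableSpace Ω] {P : Measure Ω}
    [IsProbabilityMeasure P] {W : Fin n → Ω → α} (hW : ∀ i, AEMeasurable (W i) P)
    (hindep : iIndepFun W P) {f : (Fin n → α) → ℝ} {Δ : Fin n → ℝ≥0}
    (hf : HasBoundedDifferences f Δ) :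
    HasSubgaussianMGF (fun ω => f (fun i => W i ω) - ∫ ω', f (fun i => W i ω') ∂P)
      (∑ i, (Δ i / 2) ^ 2) P := by
  have := fun i => Measure.isProbabilityMeasure_map (hW i)
  have hlaw := hindep.map_fun_eq_pi_map hW
  have h := hf.hasSubgaussianMGF_sub_integral_pi fun i => P.map (W i)
  rw [← hlaw, integral_map (aemeasurable_pi_lambda _ hW)
    (measurable_of_finite f).aestronglyMeasurable] at h
  exact h.of_map (aemeasurable_pi_lambda _ hW)

end HasBoundedDifferences

end FiniteAlphabet

lemma hasBoundedDifferences_of_abs_sub_update_not_le {n : ℕ} {f : (Fin n → Bool) → ℝ}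
    {Δ : Fin n → ℝ≥0} (hf : ∀ x i, |f x - f (Function.update x i (!x i))| ≤ Δ i) :
    HasBoundedDifferences f Δ := by
  intro x i a
  rcases Bool.eq_or_eq_not a (x i) with rfl | rfl
  · simp
  · rw [abs_sub_comm]; exact hf x i

/-- Sub-Gaussian Orlicz norm bound from the method of bounded differences:
`‖f(W) − E f(W)‖_Ψ ≤ √(3/2) ‖Δf‖₂` with `Ψ(x) = e^{x²} − 1`. -/
theorem stmt_10 {Ω : Type*} [MeasureSpace Ω] [IsProbabilityMeasure (ℙ : Measure Ω)]
    {n : ℕ} (W : Fin n → Ω → Bool) (hmeas : ∀ i, Measurable (W i))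
    (hindep : iIndepFun W ℙ)
    (f : (Fin n → Bool) → ℝ)
    (Δ : Fin n → ℝ)
    (hΔ : ∀ i, Δ i = ⨆ x : Fin n → Bool, |f x - f (Function.update x i (!x i))|) :
    sInf {t : ℝ | 0 < t ∧
        Integrable (fun ω =>
          Real.exp (((f (fun i => W i ω) - ∫ ω', f (fun i => W i ω') ∂ℙ) / t) ^ 2) - 1) ℙ ∧
        ∫ ω, (Real.exp (((f (fun i => W i ω) - ∫ ω', f (fun i => W i ω') ∂ℙ) / t) ^ 2) - 1) ∂ℙ
          ≤ 1}
      ≤ Real.sqrt (3 / 2) * Real.sqrt (∑ i, Δ i ^ 2) := by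
  have hΔ₀ (i : Fin n) : 0 ≤ Δ i := hΔ i ▸ Real.iSup_nonneg fun _ => abs_nonneg _
  have hbd : HasBoundedDifferences f (fun i => (Δ i).toNNReal) :=
    hasBoundedDifferences_of_abs_sub_update_not_le fun x i =>
      (hΔ i ▸ le_ciSup (f := fun x => |f x - f (Function.update x i (!x i))|)
        (Set.finite_range _).bddAbove x).trans (Real.le_coe_toNNReal _)
  have hc : ((∑ i, ((Δ i).toNNReal / 2) ^ 2 : ℝ≥0) : ℝ) = (∑ i, Δ i ^ 2) / 4 := by
    push_cast [Real.coe_toNNReal _ (hΔ₀ _)]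
    rw [Finset.sum_div]
    congr 1 with i
    ring
  have hσ₀ : 0 ≤ ∑ i, Δ i ^ 2 := Finset.sum_nonneg fun i _ => sq_nonneg _
  have hσ : (√(3 / 2) * √(∑ i, Δ i ^ 2)) ^ 2 = 3 / 2 * ∑ i, Δ i ^ 2 := by
    rw [mul_pow, sq_sqrt (by norm_num), sq_sqrt hσ₀]
  exact (hbd.hasSubgaussianMGF_comp_sub_integral (fun i => (hmeas i).aemeasurable)
    hindep).expSqOrliczNorm_le (by positivity) (by rw [hc, hσ]; linarith)
end
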